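/- arXiv:2503.04986 — 2 statements merged into one kernel-verified Lean document; each statement's English description precedes it below -/
import Mathlib

section
/- An integer matrix A ∈ Z^{d×n} with entries bounded by m has Kruskal rank less than k (over Q) if and only if there exists a nonempty subset U ⊆ [n] with |U| ≤ k and a nonzero integer coefficient vector α indexed by U, with all |α_i| ≤ ((k-1)!·m^{k-1})^2, such that Σ_{j∈U} α_j · A_j = 0, where A_j denotes column j of A. -/
/-!
Suppose some at most `k` columns are dependent over `ℚ`. Inside them pick an independent set `W`
of columns and one more column `a₀ = ∑_{j ∈ W} c_j a_j` in their span. Since the columns in `W`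
are independent, some `|W|` rows of them form an integer matrix `Q` with `det Q ≠ 0`. On these
rows `Q c = b`, where `b` is the restriction of `a₀`, so by Cramer's rule `det Q • c` is the
integer vector `cramer Q b`, whose entries are `|W| × |W|` minors of `A`. Thus the coefficients
`(det Q • c, -det Q)` give an integer relation whose entries are bounded, via the Leibniz
expansion, by `|W|! m^|W| ≤ (k-1)! m^(k-1)`.
-/

open Matrix Submodule Nat

theorem Matrix.exists_submatrix_det_ne_zero_of_linearIndependent_col {K κ ι : Type*} [Field K]
    [Fintype κ] [Fintype ι] [DecidableEq ι] {M : Matrix κ ι K} (hM : LinearIndependent K M.col) :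
    ∃ ρ : ι → κ, (M.submatrix ρ id).det ≠ 0 := by
  classical
  obtain ⟨b, -, -, hspan, hb⟩ := exists_linearIndepOn_extension (linearIndepOn_empty K M.row)
    (Set.empty_subset Set.univ)
  have hcard : Fintype.card b = Fintype.card ι := by
    have hrows : span K (Set.range M.row) = span K (M.row '' b) :=
      le_antisymm (span_le.mpr (Set.image_univ ▸ hspan)) (span_mono (Set.image_subset_range _ _))
    rw [← LinearIndependent.rank_matrix (M := Mᵀ) hM, rank_transpose, rank_eq_finrank_span_row,
      hrows, Set.image_eq_range, finrank_span_eq_card hb]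
  let e : ι ≃ b := (Fintype.equivOfCardEq hcard).symm
  refine ⟨Subtype.val ∘ e, ?_⟩
  have hrows : LinearIndependent K (M.submatrix (Subtype.val ∘ e) id).row := hb.comp e e.injective
  exact ((isUnit_iff_isUnit_det _).mp (linearIndependent_rows_iff_isUnit.mp hrows)).ne_zero

theorem Matrix.cramer_mulVec {R n : Type*} [CommRing R] [Fintype n] [DecidableEq n]
    (A : Matrix n n R) (c : n → R) : A.cramer (A *ᵥ c) = A.det • c := by
  rw [cramer_eq_adjugate_mulVec, mulVec_mulVec, adjugate_mul, smul_mulVec, one_mulVec]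

theorem RingHom.comp_cramer_eq_det_smul {R S n : Type*} [CommRing R] [CommRing S] [Fintype n]
    [DecidableEq n] (f : R →+* S) {A : Matrix n n R} {b : n → R} {c : n → S}
    (h : A.map f *ᵥ c = f ∘ b) : f ∘ A.cramer b = f A.det • c := by
  have hmap : f ∘ A.cramer b = (A.map f).cramer (f ∘ b) := by
    funext i
    rw [cramer_eq_adjugate_mulVec, cramer_eq_adjugate_mulVec, Function.comp_apply, map_mulVec]
    exact congrFun (congrArg (· *ᵥ (f ∘ b)) (f.map_adjugate A)) i
  rw [hmap, ← h, cramer_mulVec, ← f.mapMatrix_apply, ← f.map_det]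

theorem Matrix.abv_cramer_le {R S n : Type*} [CommRing R] [Nontrivial R] [CommRing S]
    [LinearOrder S] [IsStrictOrderedRing S] [Fintype n] [DecidableEq n] {A : Matrix n n R}
    {b : n → R} {abv : AbsoluteValue R S} {x : S} (hA : ∀ i j, abv (A i j) ≤ x) (hb : ∀ i, abv (b i) ≤ x)
    (i : n) : abv (A.cramer b i) ≤ (Fintype.card n)! • x ^ Fintype.card n := by
  rw [cramer_apply]
  refine det_le fun a j => ?_
  rw [updateCol_apply]
  split_ifs
  exacts [hb a, hA a j]

theorem factorial_mul_pow_le_sq_of_le {m : ℤ} (hm : 1 ≤ m) {r s : ℕ} (h : r ≤ s) :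
    (r ! : ℤ) * m ^ r ≤ ((s ! : ℤ) * m ^ s) ^ 2 := by
  have hs : 1 ≤ (s ! : ℤ) * m ^ s :=
    one_le_mul_of_one_le_of_one_le (by exact_mod_cast s.factorial_pos) (one_le_pow₀ hm)
  calc (r ! : ℤ) * m ^ r ≤ s ! * m ^ s := by gcongr
    _ ≤ _ := le_self_pow₀ hs two_ne_zero

theorem exists_linearIndepOn_mem_span_of_not_linearIndepOn {K V ι : Type*} [DivisionRing K]
    [AddCommGroup V] [Module K V] [DecidableEq ι] {v : ι → V} {S : Finset ι}
    (h : ¬ LinearIndepOn K v S) :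
    ∃ W : Finset ι, ∃ j ∉ W, insert j W ⊆ S ∧ LinearIndepOn K v W ∧ v j ∈ span K (v '' W) := by
  obtain ⟨W, hWS, -, hspan, hW⟩ :=
    exists_linearIndepOn_extension (linearIndepOn_empty K v) (Set.empty_subset (S : Set ι))
  lift W to Finset ι using S.finite_toSet.subset hWS
  rw [Finset.coe_subset] at hWS
  obtain ⟨j, hjS, hjW⟩ := Finset.exists_of_ssubset (hWS.ssubset_of_ne (by rintro rfl; exact h hW))
  exact ⟨W, j, hjW, Finset.insert_subset hjS hWS, hW, hspan (Set.mem_image_of_mem v hjS)⟩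

section IntegerMatrix

variable {κ ι : Type*} (A : Matrix κ ι ℤ)

theorem exists_bounded_int_relation_of_mem_span [Fintype κ] [DecidableEq ι] {m : ℤ}
    (hA : ∀ i j, |A i j| ≤ m) {W : Finset ι} (hW : LinearIndepOn ℚ (A.map (Int.cast : ℤ → ℚ))ᵀ W)
    {j₀ : ι} (hj₀ : j₀ ∉ W)
    (hspan : (A.map (Int.cast : ℤ → ℚ))ᵀ j₀ ∈ span ℚ ((A.map (Int.cast : ℤ → ℚ))ᵀ '' W)) :
    ∃ α : ι → ℤ, α j₀ ≠ 0 ∧ (∀ j ∉ insert j₀ W, α j = 0) ∧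
      (∀ j, |α j| ≤ W.card ! * m ^ W.card) ∧ ∑ j ∈ insert j₀ W, α j • Aᵀ j = 0 := by
  obtain ⟨c, hc⟩ : ∃ c : W → ℚ,
      ∑ j, c j • (A.map (Int.cast : ℤ → ℚ))ᵀ j = (A.map (Int.cast : ℤ → ℚ))ᵀ j₀ :=
    (Fintype.mem_span_image_iff_exists_fun ℚ).mp hspan
  obtain ⟨ρ, hρ⟩ := exists_submatrix_det_ne_zero_of_linearIndependent_col
    (M := (A.map (Int.cast : ℤ → ℚ)).submatrix id ((↑) : W → ι)) hW
  set Q := A.submatrix ρ ((↑) : W → ι)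
  set b : W → ℤ := fun a => A (ρ a) j₀
  have hQ : Q.det ≠ 0 := fun h0 => hρ <| by
    change ((Int.castRingHom ℚ).mapMatrix Q).det = 0
    rw [← RingHom.map_det, h0, map_zero]
  have hQc : Q.map (↑) *ᵥ c = (↑) ∘ b := funext fun a => by
    simpa [Q, b, mulVec, dotProduct, mul_comm] using congrFun hc (ρ a)
  have hcramer (j : W) : (Q.cramer b j : ℚ) = Q.det * c j :=
    congrFun ((Int.castRingHom ℚ).comp_cramer_eq_det_smul hQc) j
  let α : ι → ℤ := fun j => if h : j ∈ W then Q.cramer b ⟨j, h⟩ else if j = j₀ then -Q.det else 0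
  have hαj₀ : α j₀ = -Q.det := by simp [α, hj₀]
  refine ⟨α, hαj₀ ▸ neg_ne_zero.mpr hQ, fun j hj => ?_, fun j => ?_, ?_⟩
  · rw [Finset.mem_insert, not_or] at hj
    simp [α, hj.1, hj.2]
  · have hdet := det_le (A := Q) (abv := AbsoluteValue.abs) fun a j => hA _ _
    have hcr := abv_cramer_le (A := Q) (b := b) (abv := AbsoluteValue.abs) (fun a j => hA _ _)
      (fun a => hA _ _)
    simp only [AbsoluteValue.abs_apply, Fintype.card_coe, nsmul_eq_mul] at hdet hcr
    simp only [α]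
    split_ifs
    exacts [hcr _, by rwa [abs_neg], by simpa using (abs_nonneg _).trans hdet]
  · have hαW : ∑ j ∈ W, α j • Aᵀ j = ∑ j : W, Q.cramer b j • Aᵀ j := by
      rw [← Finset.sum_coe_sort W]
      exact Finset.sum_congr rfl fun j _ => by simp [α, j.2]
    rw [Finset.sum_insert hj₀, hαW]
    funext i
    apply Int.cast_injective (α := ℚ)
    have hci := congrFun hc i
    simp only [Finset.sum_apply, Pi.smul_apply, transpose_apply, map_apply, smul_eq_mul] at hci
    simp only [hαj₀, Pi.add_apply, Finset.sum_apply, Pi.smul_apply, transpose_apply, smul_eq_mul,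
      Pi.zero_apply, Int.cast_add, Int.cast_mul, Int.cast_neg, Int.cast_sum, Int.cast_zero, hcramer,
      mul_assoc, ← Finset.mul_sum, hci]
    ring

theorem not_linearIndepOn_of_int_relation {U : Finset ι} {α : ι → ℤ} {j : ι} (hjU : j ∈ U)
    (hj : α j ≠ 0) (h : ∑ j ∈ U, α j • Aᵀ j = 0) :
    ¬ LinearIndepOn ℚ (A.map (Int.cast : ℤ → ℚ))ᵀ U := by
  intro hind
  have hcast : ∑ j ∈ U, (α j : ℚ) • (A.map (Int.cast : ℤ → ℚ))ᵀ j = 0 := funext fun i => by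
    simpa using congr_arg (Int.cast : ℤ → ℚ) (congrFun h i)
  exact hj (by exact_mod_cast linearIndepOn_finset_iff.mp hind _ hcast j hjU)

end IntegerMatrix

/-- An integer matrix with entries bounded by `m ≥ 1` has Kruskal rank less than `k`
over `ℚ` iff there is a nonempty subset `U` of at most `k` columns and a nonzero
integer coefficient vector supported on `U`, with coefficients bounded by
`((k-1)!·m^{k-1})²`, witnessing a linear dependence of the columns in `U`. -/
theorem kruskalRank_lt_iff_bounded_dependence (d n k : ℕ) (m : ℤ) (hm : 1 ≤ m)
    (A : Matrix (Fin d) (Fin n) ℤ) (hA : ∀ i j, |A i j| ≤ m) :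
    (∃ S : Finset (Fin n), S.card ≤ k ∧
        ¬ LinearIndependent ℚ
          (fun j : S => (A.map (Int.cast : ℤ → ℚ)).transpose (j : Fin n))) ↔
      (∃ U : Finset (Fin n), U.Nonempty ∧ U.card ≤ k ∧
        ∃ α : Fin n → ℤ, α ≠ 0 ∧ (∀ j ∉ U, α j = 0) ∧
          (∀ j, |α j| ≤ (((k - 1).factorial : ℤ) * m ^ (k - 1)) ^ 2) ∧
          ∑ j ∈ U, α j • A.transpose j = 0) := by
  constructor
  · rintro ⟨S, hSk, hdep⟩
    obtain ⟨W, j₀, hj₀, hWS, hW, hspan⟩ := exists_linearIndepOn_mem_span_of_not_linearIndepOn hdep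
    obtain ⟨α, hα₀, hαsupp, hαbound, hαsum⟩ :=
      exists_bounded_int_relation_of_mem_span A hA hW hj₀ hspan
    have hcard : (insert j₀ W).card ≤ k := (Finset.card_le_card hWS).trans hSk
    rw [Finset.card_insert_of_notMem hj₀] at hcard
    refine ⟨insert j₀ W, Finset.insert_nonempty _ _, by rwa [Finset.card_insert_of_notMem hj₀], α,
      fun h => hα₀ (congrFun h j₀), hαsupp,
      fun j => (hαbound j).trans (factorial_mul_pow_le_sq_of_le hm (by omega)), hαsum⟩
  · rintro ⟨U, -, hUk, α, hα, hαsupp, -, hαsum⟩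
    obtain ⟨j, hj⟩ := Function.ne_iff.mp hα
    have hjU : j ∈ U := by_contra fun hjU => hj (hαsupp j hjU)
    exact ⟨U, hUk, not_linearIndepOn_of_int_relation A hjU hj hαsum⟩
end

section
/- If A ∈ Z^{d×n} has Kruskal rank at least k over the rationals and entries bounded in absolute value by m, and x ∈ Z^n is a nonzero vector with ‖x‖_0 ≤ k and ‖x‖_∞ ≤ N, then among any set of more than log₂(k·m·N) distinct primes there is one prime p such that A·x is not congruent to 0 modulo p. -/
/-- If `A ∈ ℤ^{d×n}` has Kruskal rank at least `k` over `ℚ` (every `k` columns are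
linearly independent over `ℚ`), entries bounded by `m`, and `x ∈ ℤⁿ` is nonzero with
at most `k` nonzero coordinates, all bounded by `N`, then among any set of more than
`log₂(k·m·N)` distinct primes, some prime `p` satisfies `A·x ≢ 0 (mod p)`. -/
theorem exists_good_prime_for_sparse_vector (d n k : ℕ) (hk : k ≤ n)
    (m N : ℤ) (hm : 1 ≤ m) (hN : 1 ≤ N)
    (A : Matrix (Fin d) (Fin n) ℤ) (hA : ∀ i j, |A i j| ≤ m)
    (hkruskal : ∀ S : Finset (Fin n), S.card = k →
      LinearIndependent ℚ
        (fun j : S => (A.map (Int.cast : ℤ → ℚ)).transpose (j : Fin n)))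
    (x : Fin n → ℤ) (hx : x ≠ 0)
    (hx0 : (Finset.univ.filter fun j => x j ≠ 0).card ≤ k)
    (hxN : ∀ j, |x j| ≤ N)
    (P : Finset ℕ) (hP : ∀ p ∈ P, p.Prime)
    (hcard : Real.logb 2 ((k : ℝ) * (m : ℝ) * (N : ℝ)) < (P.card : ℝ)) :
    ∃ p ∈ P, ∃ i : Fin d, ¬ ((p : ℤ) ∣ A.mulVec x i) := by
  classical
  set S₀ : Finset (Fin n) := Finset.univ.filter fun j => x j ≠ 0 with hS₀def
  obtain ⟨S, hS₀S, hScard⟩ := Finset.exists_superset_card_eq hx0 (by simpa using hk)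
  have hxoff : ∀ j ∉ S, x j = 0 := by
    intro j hj
    by_contra hxj
    exact hj (hS₀S (by simp [hS₀def, hxj]))
  -- A.mulVec x ≠ 0
  have hAx : ∃ i, A.mulVec x i ≠ 0 := by
    by_contra h
    push_neg at h
    have hli := hkruskal S hScard
    rw [Fintype.linearIndependent_iff] at hli
    obtain ⟨j, hj⟩ := Function.ne_iff.mp hx
    have hj' : x j ≠ 0 := by simpa using hj
    have hjS : j ∈ S := hS₀S (by simp [hS₀def, hj'])
    have hsum : ∑ j : S, ((x j : ℚ)) • (A.map (Int.cast : ℤ → ℚ)).transpose (j : Fin n) = 0 := by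
      funext i
      have : ∑ j : S, (x (j : Fin n) : ℚ) * (A i j : ℚ) = ((A.mulVec x i : ℤ) : ℚ) := by
        rw [Matrix.mulVec, dotProduct]
        push_cast
        rw [Finset.sum_coe_sort S (fun j => (x j : ℚ) * (A i j : ℚ))]
        rw [Finset.sum_subset (Finset.subset_univ S)]
        · exact Finset.sum_congr rfl fun j _ => mul_comm _ _
        · intro j _ hjS'
          simp [hxoff j hjS']
      simpa [Matrix.transpose_apply, Matrix.map_apply, h i] using this
    have := hli (fun j => (x j : ℚ)) hsum ⟨j, hjS⟩
    exact hj' (by exact_mod_cast this)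
  obtain ⟨i, hi⟩ := hAx
  -- bound |A.mulVec x i| ≤ k * m * N
  have hbound : |A.mulVec x i| ≤ (k : ℤ) * m * N := by
    rw [Matrix.mulVec, dotProduct]
    have h1 : ∑ j, A i j * x j = ∑ j ∈ S₀, A i j * x j := by
      refine (Finset.sum_subset (Finset.subset_univ S₀) ?_).symm
      intro j _ hj
      have : x j = 0 := by by_contra hxj; exact hj (by simp [hS₀def, hxj])
      simp [this]
    rw [h1]
    calc |∑ j ∈ S₀, A i j * x j| ≤ ∑ j ∈ S₀, |A i j * x j| := Finset.abs_sum_le_sum_abs _ _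
      _ ≤ ∑ _j ∈ S₀, m * N := by
          refine Finset.sum_le_sum fun j _ => ?_
          rw [abs_mul]
          exact mul_le_mul (hA i j) (hxN j) (abs_nonneg _) (le_trans zero_le_one hm)
      _ = (S₀.card : ℤ) * (m * N) := by rw [Finset.sum_const, nsmul_eq_mul]
      _ ≤ (k : ℤ) * m * N := by
          rw [mul_assoc]
          exact mul_le_mul_of_nonneg_right (by exact_mod_cast hx0)
            (mul_nonneg (le_trans zero_le_one hm) (le_trans zero_le_one hN))
  -- main contradiction
  by_contra hcon
  push_neg at hcon
  set y := A.mulVec x i with hydef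
  have hdvd : ∀ p ∈ P, p ∣ y.natAbs := fun p hp => Int.natCast_dvd.mp (hcon p hp i)
  have hprod : ∏ p ∈ P, p ∣ y.natAbs := Finset.prod_primes_dvd _ (fun p hp => (hP p hp).prime) hdvd
  have h2 : 2 ^ P.card ≤ ∏ p ∈ P, p :=
    Finset.pow_card_le_prod P _ 2 (fun p hp => (hP p hp).two_le)
  have hyne : y.natAbs ≠ 0 := Int.natAbs_ne_zero.mpr hi
  have hle : 2 ^ P.card ≤ y.natAbs := le_trans h2 (Nat.le_of_dvd (Nat.pos_of_ne_zero hyne) hprod)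
  have hle' : (2 : ℝ) ^ P.card ≤ (k : ℝ) * (m : ℝ) * (N : ℝ) := by
    have h1 : ((2 ^ P.card : ℕ) : ℝ) ≤ ((y.natAbs : ℤ) : ℝ) := by exact_mod_cast hle
    have h2' : ((y.natAbs : ℤ) : ℝ) ≤ (((k : ℤ) * m * N : ℤ) : ℝ) := by
      exact_mod_cast (Int.abs_eq_natAbs y ▸ hbound)
    push_cast at h1 h2' ⊢
    linarith
  have hfin := Real.logb_le_logb_of_le (b := 2) (by norm_num) (by positivity) hle'
  rw [← Real.rpow_natCast, Real.logb_rpow (by norm_num) (by norm_num)] at hfin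
  linarith
end
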